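/- arXiv:2201.00801 — 2 statements merged into one kernel-verified Lean document; each statement's English description precedes it below -/
import Mathlib

section
/- Let M be a symmetric positive definite n×n real matrix and let x : ℝ → ℝⁿ be a continuously-defined trajectory satisfying, for every t ∈ ℝ, the differential equation x'(t) = (1 − ⟨x(t), M x(t)⟩) · (−x(t)) (i.e. the cubic system ẋ = (1 − xᵀMx)Fx with F = −I). If ⟨x(0), M x(0)⟩ < 1, then x(t) → 0 as t → ∞. In other words, the open ellipsoid {x₀ : x₀ᵀ M x₀ < 1} is contained in the region of attraction of the origin. -/
open scoped RealInnerProductSpace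

/-- For the cubic system ẋ = (1 − xᵀMx)(−x) with M symmetric
positive definite, every trajectory starting in the open ellipsoid
{x₀ : x₀ᵀMx₀ < 1} converges to the origin. -/
theorem stmt14 {n : ℕ} (M : Matrix (Fin n) (Fin n) ℝ) (hM : M.PosDef)
    (x : ℝ → EuclideanSpace ℝ (Fin n))
    (hx : ∀ t : ℝ, HasDerivAt x
      ((1 - ⟪x t, (WithLp.toLp 2 (M.mulVec (x t)) : EuclideanSpace ℝ (Fin n))⟫) • (-(x t))) t)
    (h0 : ⟪x 0, (WithLp.toLp 2 (M.mulVec (x 0)) : EuclideanSpace ℝ (Fin n))⟫ < 1) :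
    Filter.Tendsto x Filter.atTop (nhds 0) := by
  set V : ℝ → ℝ := fun t => ⟪x t, (WithLp.toLp 2 (M.mulVec (x t)) : EuclideanSpace ℝ (Fin n))⟫ with hVdef
  have ht : M.transpose = M := by
    have := hM.1
    simpa [Matrix.IsHermitian, Matrix.conjTranspose_eq_transpose_of_trivial] using this
  have hVnn : ∀ t, 0 ≤ V t := by
    intro t
    have := hM.posSemidef.dotProduct_mulVec_nonneg (WithLp.equiv 2 _ (x t))
    simpa [PiLp.inner_apply, RCLike.inner_apply, dotProduct, hVdef, mul_comm] using this
  -- derivative of V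
  have hA' : ∀ t, HasDerivAt (fun s => (Matrix.toEuclideanLin M) (x s))
      ((Matrix.toEuclideanLin M) ((1 - V t) • (-(x t)))) t := by
    intro t
    exact (LinearMap.toContinuousLinearMap (Matrix.toEuclideanLin M)).hasFDerivAt.comp_hasDerivAt
      t (hx t)
  have hV' : ∀ t, HasDerivAt V (2 * V t * (V t - 1)) t := by
    intro t
    have h := (hx t).inner ℝ (hA' t)
    have e1 : (Matrix.toEuclideanLin M) ((1 - V t) • (-(x t)))
        = (1 - V t) • (-((Matrix.toEuclideanLin M) (x t))) := by
      rw [map_smul, map_neg]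
    rw [e1] at h
    have e2 : (fun s => (⟪x s, (Matrix.toEuclideanLin M) (x s)⟫ : ℝ)) = V := rfl
    rw [e2] at h
    refine h.congr_deriv ?_
    rw [real_inner_smul_right, real_inner_smul_left, inner_neg_right, inner_neg_left]
    have hsy : (⟪x t, (Matrix.toEuclideanLin M) (x t)⟫ : ℝ) = V t := rfl
    have hsy2 : (⟪(Matrix.toEuclideanLin M) (x t), x t⟫ : ℝ) = V t := by
      rw [← hsy]
      simp only [PiLp.inner_apply, RCLike.inner_apply, conj_trivial]
      have : dotProduct (WithLp.equiv 2 _ (x t)) (M.mulVec (WithLp.equiv 2 _ (x t)))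
          = dotProduct (M.mulVec (WithLp.equiv 2 _ (x t))) (WithLp.equiv 2 _ (x t)) := by
        rw [Matrix.dotProduct_mulVec, ← Matrix.mulVec_transpose, ht, dotProduct_comm]
      simpa [dotProduct, mul_comm] using this.symm
    rw [hsy]
    have hsy3 : (⟪x t, (WithLp.toLp 2 (M.mulVec (x t)) : EuclideanSpace ℝ (Fin n))⟫ : ℝ) = V t := rfl
    rw [hsy3]
    ring
  have hVcont : Continuous V :=
    continuous_iff_continuousAt.2 fun t => (hV' t).continuousAt
  -- antiderivative of 2V
  set B : ℝ → ℝ := fun t => ∫ s in (0:ℝ)..t, 2 * V s with hBdef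
  have hB' : ∀ t, HasDerivAt B (2 * V t) t := by
    intro t
    exact ((continuous_const.mul hVcont).integral_hasStrictDerivAt 0 t).hasDerivAt
  have hBnn : ∀ t, 0 ≤ t → 0 ≤ B t := by
    intro t htt
    exact intervalIntegral.integral_nonneg htt (fun s _ => by have := hVnn s; linarith)
  -- u := (V - 1) * exp (-B) is constant
  set u : ℝ → ℝ := fun t => (V t - 1) * Real.exp (-B t) with hudef
  have hu' : ∀ t, HasDerivAt u 0 t := by
    intro t
    have h1 := (hV' t).sub_const 1
    have h2 := ((hB' t).neg).exp
    have h3 := h1.mul h2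
    refine h3.congr_deriv ?_
    ring
  have hconst : ∀ t, u t = u 0 :=
    fun t => is_const_of_deriv_eq_zero (fun s => (hu' s).differentiableAt)
      (fun s => (hu' s).deriv) t 0
  -- V t ≤ V 0 for t ≥ 0
  have hVle : ∀ t, 0 ≤ t → V t ≤ V 0 := by
    intro t htt
    have h := hconst t
    rw [hudef] at h
    simp only at h
    have hB0 : B 0 = 0 := intervalIntegral.integral_same
    rw [hB0] at h
    have hexp : Real.exp (-B t) ≤ 1 := by
      rw [Real.exp_le_one_iff]
      linarith [hBnn t htt]
    have hpos : 0 < Real.exp (-B t) := Real.exp_pos _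
    -- (V t - 1) * exp(-B t) = (V 0 - 1) * 1, with V 0 - 1 < 0
    rw [neg_zero, Real.exp_zero, mul_one] at h
    nlinarith [Real.exp_pos (-B t), hVnn t]
  have hc : 0 < 1 - V 0 := by linarith
  set c : ℝ := 1 - V 0 with hcdef
  -- g = ‖x‖², h = g * exp (2 c t)
  set g : ℝ → ℝ := fun t => ⟪x t, x t⟫ with hgdef
  have hgnn : ∀ t, 0 ≤ g t := fun t => real_inner_self_nonneg
  have hg' : ∀ t, HasDerivAt g (-2 * (1 - V t) * g t) t := by
    intro t
    have h := (hx t).inner ℝ (hx t)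
    refine h.congr_deriv ?_
    rw [real_inner_smul_right, real_inner_smul_left, inner_neg_right, inner_neg_left]
    ring
  set h : ℝ → ℝ := fun t => g t * Real.exp (2 * c * t) with hhdef
  have hh' : ∀ t, HasDerivAt h ((2 * (V t - V 0)) * g t * Real.exp (2 * c * t)) t := by
    intro t
    have he : HasDerivAt (fun s : ℝ => 2 * c * s) (2 * c) t := by
      simpa using (hasDerivAt_id t).const_mul (2 * c)
    have h1 := (hg' t).mul he.exp
    refine h1.congr_deriv ?_
    rw [hcdef]
    ring
  have hanti : AntitoneOn h (Set.Ici (0:ℝ)) := by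
    apply antitoneOn_of_deriv_nonpos (convex_Ici 0)
    · exact Continuous.continuousOn (continuous_iff_continuousAt.2
        fun t => (hh' t).continuousAt)
    · intro t _
      exact (hh' t).differentiableAt.differentiableWithinAt
    · intro t htt
      rw [(hh' t).deriv]
      rw [interior_Ici] at htt
      have h1 : V t - V 0 ≤ 0 := by linarith [hVle t (le_of_lt htt)]
      have h2 : 0 ≤ g t := hgnn t
      have h3 : 0 < Real.exp (2 * c * t) := Real.exp_pos _
      have h4 : 0 ≤ g t * Real.exp (2 * c * t) := mul_nonneg h2 h3.le
      nlinarith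
  have hbound : ∀ t, 0 ≤ t → g t ≤ g 0 * Real.exp (-(2 * c * t)) := by
    intro t htt
    have := hanti (Set.self_mem_Ici) (Set.mem_Ici.2 htt) htt
    rw [hhdef] at this
    simp only at this
    rw [mul_zero, Real.exp_zero, mul_one] at this
    rw [Real.exp_neg, ← div_eq_mul_inv, le_div_iff₀ (Real.exp_pos _)]
    exact this
  -- g → 0
  have hgto : Filter.Tendsto g Filter.atTop (nhds 0) := by
    have hub : Filter.Tendsto (fun t => g 0 * Real.exp (-(2 * c * t))) Filter.atTop (nhds 0) := by
      have : Filter.Tendsto (fun t : ℝ => -(2 * c * t)) Filter.atTop Filter.atBot := by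
        apply Filter.tendsto_neg_atBot_iff.mpr
        exact (Filter.tendsto_id.const_mul_atTop (by positivity : (0:ℝ) < 2 * c))
      have h2 := Real.tendsto_exp_atBot.comp this
      simpa using h2.const_mul (g 0)
    apply tendsto_of_tendsto_of_tendsto_of_le_of_le' tendsto_const_nhds hub
    · exact Filter.Eventually.of_forall hgnn
    · filter_upwards [Filter.eventually_ge_atTop (0:ℝ)] with t htt
      exact hbound t htt
  -- conclude
  rw [tendsto_zero_iff_norm_tendsto_zero]
  have hsq : ∀ t, ‖x t‖ = Real.sqrt (g t) := by
    intro t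
    rw [hgdef]
    simp only
    rw [real_inner_self_eq_norm_sq, Real.sqrt_sq (norm_nonneg _)]
  have : Filter.Tendsto (fun t => Real.sqrt (g t)) Filter.atTop (nhds 0) := by
    have := (Real.continuous_sqrt.tendsto' 0 0 Real.sqrt_zero).comp hgto
    simpa [Function.comp_def] using this
  simpa [hsq] using this
end

section
/- Let M be a symmetric positive definite n×n real matrix and let x : ℝ → ℝⁿ satisfy, for every t ∈ ℝ, the differential equation x'(t) = (1 − ⟨x(t), M x(t)⟩) · (−x(t)). If ⟨x(0), M x(0)⟩ > 1, then the trajectory does not converge to the origin: it is not the case that x(t) → 0 as t → ∞; moreover ⟨x(t), M x(t)⟩ ≥ ⟨x(0), M x(0)⟩ > 1 for all t ≥ 0. -/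
open scoped RealInnerProductSpace

/-- For the cubic system ẋ = (1 − xᵀMx)(−x) with M symmetric
positive definite, a trajectory starting outside the closed ellipsoid
(x₀ᵀMx₀ > 1) does not converge to the origin; moreover
x(t)ᵀMx(t) ≥ x(0)ᵀMx(0) > 1 for all t ≥ 0. -/
theorem stmt15 {n : ℕ} (M : Matrix (Fin n) (Fin n) ℝ) (hM : M.PosDef)
    (x : ℝ → EuclideanSpace ℝ (Fin n))
    (hx : ∀ t : ℝ, HasDerivAt x
      ((1 - ⟪x t, (WithLp.toLp 2 (M.mulVec (x t)) : EuclideanSpace ℝ (Fin n))⟫) • (-(x t))) t)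
    (h0 : 1 < ⟪x 0, (WithLp.toLp 2 (M.mulVec (x 0)) : EuclideanSpace ℝ (Fin n))⟫) :
    ¬ Filter.Tendsto x Filter.atTop (nhds 0) ∧
    ∀ t : ℝ, 0 ≤ t →
      ⟪x 0, (WithLp.toLp 2 (M.mulVec (x 0)) : EuclideanSpace ℝ (Fin n))⟫ ≤
        ⟪x t, (WithLp.toLp 2 (M.mulVec (x t)) : EuclideanSpace ℝ (Fin n))⟫ := by
  set L : EuclideanSpace ℝ (Fin n) →L[ℝ] EuclideanSpace ℝ (Fin n) :=
    LinearMap.toContinuousLinearMap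
      (Matrix.toEuclideanLin M) with hL
  set f : ℝ → ℝ := fun t => ⟪x t, (WithLp.toLp 2 (M.mulVec (x t)) : EuclideanSpace ℝ (Fin n))⟫ with hf
  have hMx : ∀ t : ℝ, HasDerivAt (fun t : ℝ => (show EuclideanSpace ℝ (Fin n) from WithLp.toLp 2 (M.mulVec (x t))))
      (L ((1 - f t) • (-(x t)))) t := fun t => (L.hasFDerivAt.comp_hasDerivAt t (hx t))
  have hderiv : ∀ t : ℝ, HasDerivAt f (2 * f t * (f t - 1)) t := by
    intro t
    have hLval : L ((1 - f t) • -x t) =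
        (1 - f t) • -(show EuclideanSpace ℝ (Fin n) from WithLp.toLp 2 (M.mulVec (x t))) := by
      rw [map_smul, map_neg]
      rfl
    have h1 := (hx t).inner ℝ (hMx t)
    rw [hLval] at h1
    refine h1.congr_deriv ?_
    simp only [inner_smul_left, inner_smul_right, inner_neg_left, inner_neg_right,
      starRingEnd_apply, star_trivial]
    simp only [hf]
    ring
  have hcontf : Continuous f :=
    continuous_iff_continuousAt.2 fun t => (hderiv t).continuousAt
  set F : ℝ → ℝ := fun t => ∫ s in (0:ℝ)..t, 2 * f s with hFdef
  have hF : ∀ t : ℝ, HasDerivAt F (2 * f t) t := fun t =>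
    ((continuous_const.mul hcontf).integral_hasStrictDerivAt 0 t).hasDerivAt
  set g : ℝ → ℝ := fun t => (f t - 1) * Real.exp (-F t) with hgdef
  have hg : ∀ t : ℝ, HasDerivAt g 0 t := by
    intro t
    have h1 : HasDerivAt (fun t => Real.exp (-F t)) (Real.exp (-F t) * -(2 * f t)) t :=
      ((hF t).neg).exp
    have h2 := ((hderiv t).sub_const 1).mul h1
    exact h2.congr_deriv (by ring)
  have hgconst : ∀ t : ℝ, g t = g 0 := fun t =>
    is_const_of_deriv_eq_zero (fun s => (hg s).differentiableAt) (fun s => (hg s).deriv) t 0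
  have hF0 : F 0 = 0 := by simp [hFdef]
  have hf1 : ∀ t : ℝ, 1 < f t := by
    intro t
    have h1 := hgconst t
    simp only [hgdef, hF0, neg_zero, Real.exp_zero, mul_one] at h1
    have h2 : f t - 1 = (f 0 - 1) * Real.exp (F t) := by
      rw [← h1, mul_assoc, ← Real.exp_add, neg_add_cancel, Real.exp_zero, mul_one]
    nlinarith [Real.exp_pos (F t), h0, h2]
  have hmono : StrictMono f := by
    apply strictMono_of_deriv_pos
    intro t
    rw [(hderiv t).deriv]
    have := hf1 t
    nlinarith
  refine ⟨?_, fun t ht => hmono.monotone ht⟩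
  intro htend
  have hq : Continuous fun y : EuclideanSpace ℝ (Fin n) =>
      (⟪y, (WithLp.toLp 2 (M.mulVec y) : EuclideanSpace ℝ (Fin n))⟫ : ℝ) := by
    have : Continuous fun y : EuclideanSpace ℝ (Fin n) => (⟪y, L y⟫ : ℝ) :=
      continuous_id.inner L.continuous
    exact this
  have htf : Filter.Tendsto f Filter.atTop (nhds 0) := by
    have := (hq.tendsto 0).comp htend
    convert this using 2
    exacts [rfl, by simp]
  have hev : ∀ᶠ t in Filter.atTop, f t < 1 :=
    htf.eventually (gt_mem_nhds (by norm_num : (0:ℝ) < 1))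
  obtain ⟨t, ht⟩ := hev.exists
  exact absurd (hf1 t) (not_lt.2 ht.le)
end
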